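/- Let (p_n) be a sequence in (0,1) with p_n → 0, and consider the randomly oriented complete binary tree T_n of height n with parameter p_n. Then Var(|C_n|)/(2^n·p_n) → 1 as n → ∞, and moreover Var(|C_n|) − E[|C_n|] = O(2^n·p_n²), i.e., there exist C > 0 and N such that |Var(|C_n|) − E[|C_n|]| ≤ C·2^n·p_n² for all n ≥ N. -/

import Mathlib

open MeasureTheory ProbabilityTheory Finset
open scoped Classical

/-- Vertices of the complete binary tree of height `n`: words over `{0,1}`
of length at most `n`.  The empty word is the root; words of length `n`
are the leaves; the level of `v` is `n - |v|`. -/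
def Vtx (n : ℕ) : Type := {l : List Bool // l.length ≤ n}

/-- Edges of the complete binary tree of height `n`, indexed by the nonempty
words of length at most `n`: the edge joins such a word to its predecessor
(the word obtained by deleting the last letter). -/
def Edg (n : ℕ) : Type := {l : List Bool // l ≠ [] ∧ l.length ≤ n}

noncomputable instance (n : ℕ) : Fintype (Vtx n) := by
  apply Fintype.ofInjective (fun v : Vtx n => fun i : Fin (n + 1) => v.1[i.1]?)
  intro u v h
  apply Subtype.ext
  apply List.ext_getElem?
  intro m
  by_cases hm : m < n + 1
  · exact congrFun h ⟨m, hm⟩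
  · have hu := u.2
    have hv := v.2
    rw [List.getElem?_eq_none_iff.2, List.getElem?_eq_none_iff.2] <;> omega

noncomputable instance (n : ℕ) : Fintype (Edg n) := by
  apply Fintype.ofInjective (fun v : Edg n => fun i : Fin (n + 1) => v.1[i.1]?)
  intro u v h
  apply Subtype.ext
  apply List.ext_getElem?
  intro m
  by_cases hm : m < n + 1
  · exact congrFun h ⟨m, hm⟩
  · have hu := u.2.2
    have hv := v.2.2
    rw [List.getElem?_eq_none_iff.2, List.getElem?_eq_none_iff.2] <;> omega

/-- The Bernoulli measure on `Bool`: `true` has probability `p`,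
`false` has probability `1 - p`. -/
noncomputable def bern (p : ℝ) : Measure Bool :=
  (ENNReal.ofReal p) • Measure.dirac true + (ENNReal.ofReal (1 - p)) • Measure.dirac false

instance (p : ℝ) : IsFiniteMeasure (bern p) := by
  constructor
  simp only [bern, Measure.add_apply, Measure.smul_apply, smul_eq_mul]
  exact ENNReal.add_lt_top.mpr
    ⟨ENNReal.mul_lt_top ENNReal.ofReal_lt_top (by simp),
     ENNReal.mul_lt_top ENNReal.ofReal_lt_top (by simp)⟩

/-- The random orientation measure on the complete binary tree of height `n`:
each edge is oriented towards the root (coordinate `true`) with probability `p`,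
independently of the other edges. -/
noncomputable def treeMeasure (n : ℕ) (p : ℝ) : Measure (Edg n → Bool) :=
  Measure.pi fun _ => bern p

/-- One oriented step in the configuration `ω`: `a → b` if the tree edge between
`a` and `b` is oriented from `a` to `b` (coordinate `true` means oriented towards
the root, i.e. towards the shorter word). -/
def TStep {n : ℕ} (ω : Edg n → Bool) (a b : Vtx n) : Prop :=
  ∃ e : Edg n, (ω e = true ∧ e.1 = a.1 ∧ b.1 = e.1.dropLast) ∨
    (ω e = false ∧ e.1 = b.1 ∧ a.1 = e.1.dropLast)

/-- `X v`: the event that water, pumped into the leaves, reaches `v`, i.e. there is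
a directed path from some leaf to `v`. -/
def Xwet {n : ℕ} (v : Vtx n) : Set (Edg n → Bool) :=
  {ω | ∃ w : Vtx n, w.1.length = n ∧ Relation.ReflTransGen (TStep ω) w v}

/-- `Y v`: the event that `v` gets wet in downwards percolation: there is a leaf `w`
above `v` such that every edge on the path from `w` down to `v` is oriented
towards the root. -/
def Ydown {n : ℕ} (v : Vtx n) : Set (Edg n → Bool) :=
  {ω | ∃ w : List Bool, w.length = n ∧ v.1 <+: w ∧
    ∀ u : Edg n, u.1 <+: w → v.1.length < u.1.length → ω u = true}

/-- The recursion `ρ₀ = 1`, `ρ_{k+1} = 2 p ρ_k - (p ρ_k)²`. -/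
noncomputable def rho (p : ℝ) : ℕ → ℝ
  | 0 => 1
  | k + 1 => 2 * p * rho p k - (p * rho p k) ^ 2

/-- `α^{(n)}_k`, the probability that water reaches a level-`k` vertex from below. -/
noncomputable def alpha (p : ℝ) (n k : ℕ) : ℝ :=
  (1 - p) * p * ∑ i ∈ Finset.range (n - k),
    (1 - p) ^ i * rho p (k + i) * ∏ j ∈ Finset.range i, (1 - p * rho p (k + j))

/-- The size of the percolation cluster `C_n` (leaves excluded). -/
noncomputable def clusterSize (n : ℕ) (ω : Edg n → Bool) : ℕ :=
  Nat.card {v : Vtx n // v.1.length < n ∧ ω ∈ Xwet v}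

/-- The size of the downwards percolation cluster `C↓_n` (leaves excluded). -/
noncomputable def downClusterSize (n : ℕ) (ω : Edg n → Bool) : ℕ :=
  Nat.card {v : Vtx n // v.1.length < n ∧ ω ∈ Ydown v}

/-- The maximum level reached by water in downwards percolation. -/
noncomputable def maxLevel (n : ℕ) (ω : Edg n → Bool) : ℕ :=
  sSup ({0} ∪ {k | ∃ v : Vtx n, ω ∈ Ydown v ∧ n - v.1.length = k})

/-- The root of the tree. -/
def root (n : ℕ) : Vtx n := ⟨[], by simp⟩

section ListAux

/-- longest common prefix of two boolean words -/
def lcp : List Bool → List Bool → List Bool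
  | a :: l, b :: m => if a = b then a :: lcp l m else []
  | _, _ => []

lemma lcp_prefix_left : ∀ l m : List Bool, lcp l m <+: l := by
  intro l
  induction l with
  | nil => intro m; cases m <;> simp [lcp]
  | cons a l ih =>
    intro m
    cases m with
    | nil => simp [lcp]
    | cons b m =>
      by_cases h : a = b
      · simpa [lcp, h, List.cons_prefix_cons] using ih m
      · simp [lcp, h]

lemma lcp_prefix_right : ∀ l m : List Bool, lcp l m <+: m := by
  intro l
  induction l with
  | nil => intro m; cases m <;> simp [lcp]
  | cons a l ih =>
    intro m
    cases m with
    | nil => simp [lcp]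
    | cons b m =>
      by_cases h : a = b
      · subst h; simpa [lcp, List.cons_prefix_cons] using ih m
      · simp [lcp, h]

lemma prefix_lcp : ∀ (l c m : List Bool), c <+: l → c <+: m → c <+: lcp l m := by
  intro l
  induction l with
  | nil =>
    intro c m hc _
    have : c = [] := List.prefix_nil.1 hc
    simp [this]
  | cons a l ih =>
    intro c m hc hm
    cases c with
    | nil => exact List.nil_prefix
    | cons x c' =>
      rw [List.cons_prefix_cons] at hc
      obtain ⟨rfl, hcl⟩ := hc
      cases m with
      | nil => exact absurd hm (by simp)
      | cons b m' =>
        rw [List.cons_prefix_cons] at hm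
        obtain ⟨rfl, hcm⟩ := hm
        simpa [lcp, List.cons_prefix_cons] using ih c' m' hcl hcm

lemma lcp_eq_left {l m : List Bool} (h : l <+: m) : lcp l m = l := by
  have h1 : l <+: lcp l m := prefix_lcp l l m List.prefix_rfl h
  have h2 : lcp l m <+: l := lcp_prefix_left l m
  exact h2.eq_of_length (le_antisymm h2.length_le h1.length_le)

lemma lcp_eq_right {l m : List Bool} (h : m <+: l) : lcp l m = m := by
  have h1 : m <+: lcp l m := prefix_lcp l m m h List.prefix_rfl
  have h2 : lcp l m <+: m := lcp_prefix_right l m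
  exact h2.eq_of_length (le_antisymm h2.length_le h1.length_le)

lemma prefix_dropLast {l w : List Bool} (h : l <+: w) (hl : l.length < w.length) :
    l <+: w.dropLast := by
  rw [List.dropLast_eq_take]
  exact List.prefix_take_iff.2 ⟨h, by omega⟩

lemma take_succ_prefix_exists {m w : List Bool} (h : m <+: w) (hl : m.length < w.length) :
    ∃ b : Bool, w.take (m.length + 1) = m ++ [b] := by
  obtain ⟨t, rfl⟩ := h
  cases t with
  | nil => simp at hl
  | cons b t' =>
    refine ⟨b, ?_⟩
    rw [List.take_append, List.take_of_length_le (by omega)]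
    congr 1
    have h1 : m.length + 1 - m.length = 1 := by omega
    rw [h1]
    simp

end ListAux

section Events

/-- the event that all edges strictly between `m` and `w` (prefixes of `w` longer
than `m`) are oriented towards the root -/
def TrE (n : ℕ) (m w : List Bool) : Set (Edg n → Bool) :=
  {ω | ∀ u : Edg n, u.1 <+: w → m.length < u.1.length → ω u = true}

/-- downwards percolation wets `m` -/
def YD (n : ℕ) (m : List Bool) : Set (Edg n → Bool) :=
  {ω | ∃ w : List Bool, w.length = n ∧ m <+: w ∧ ω ∈ TrE n m w}

/-- all edges between `m` and `v` point away from the root -/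
def FlE (n : ℕ) (m v : List Bool) : Set (Edg n → Bool) :=
  {ω | ∀ u : Edg n, u.1 <+: v → m.length < u.1.length → ω u = false}

lemma ydown_eq_YD {n : ℕ} (v : Vtx n) : Ydown v = YD n v.1 := rfl


end Events

lemma inv_of_walk {n : ℕ} (ω : Edg n → Bool) (a v : Vtx n)
    (h : Relation.ReflTransGen (TStep ω) a v) :
    ∃ m : List Bool, m <+: a.1 ∧ m <+: v.1 ∧ ω ∈ TrE n m a.1 ∧ ω ∈ FlE n m v.1 := by
  induction h using Relation.ReflTransGen.head_induction_on with
  | refl =>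
    refine ⟨v.1, List.prefix_rfl, List.prefix_rfl, ?_, ?_⟩
    · intro u hu hl; exact absurd hu.length_le (by omega)
    · intro u hu hl; exact absurd hu.length_le (by omega)
  | head hstep hrest ih =>
    rename_i a' c
    obtain ⟨m, hmc, hmv, hTr, hFl⟩ := ih
    obtain ⟨e, he⟩ := hstep
    rcases he with ⟨het, hea, hc⟩ | ⟨hef, hec, ha⟩
    · -- step towards the root
      refine ⟨m, hmc.trans (by rw [hc, hea]; exact List.dropLast_prefix _), hmv, ?_, hFl⟩
      intro u hu hl
      by_cases hlen : u.1.length = a'.1.length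
      · have h2 : u = e := Subtype.ext ((hu.eq_of_length hlen).trans hea.symm)
        rw [h2]; exact het
      · have hpre : u.1 <+: c.1 := by
          rw [hc, hea]
          exact prefix_dropLast hu (lt_of_le_of_ne hu.length_le hlen)
        exact hTr u hpre hl
    · -- step away from the root
      have hcne : c.1 ≠ [] := by rw [← hec]; exact e.2.1
      have hecp : e.1 <+: c.1 := by rw [hec]
      by_cases hlen : m.length = c.1.length
      · have hm : m = c.1 := hmc.eq_of_length hlen
        have hclen : 1 ≤ c.1.length := by
          cases hc1 : c.1 with
          | nil => exact absurd hc1 hcne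
          | cons x xs => simp [hc1]
        have hlc : a'.1.length = c.1.length - 1 := by rw [ha, hec]; simp
        have h6 : a'.1 <+: c.1 := by rw [ha, hec]; exact List.dropLast_prefix _
        refine ⟨a'.1, List.prefix_rfl, h6.trans (hm ▸ hmv), ?_, ?_⟩
        · intro u hu hl; exact absurd hu.length_le (by omega)
        · intro u hu hl
          by_cases h2 : u.1.length = c.1.length
          · have hcv : c.1 <+: v.1 := hm ▸ hmv
            have h3 : u.1 = c.1 :=
              (List.prefix_of_prefix_length_le hu hcv (by omega)).eq_of_length h2
            have h4 : u = e := Subtype.ext (h3.trans hec.symm)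
            rw [h4]; exact hef
          · exact hFl u hu (by omega)
      · have hlt : m.length < c.1.length := lt_of_le_of_ne hmc.length_le hlen
        have hlt' : m.length < e.1.length := by rw [hec]; exact hlt
        have h5 := hTr e hecp hlt'
        rw [hef] at h5; exact absurd h5 (by simp)

lemma walk_up {n : ℕ} (ω : Edg n → Bool) :
    ∀ k (a b : Vtx n), a.1.length ≤ k → b.1 <+: a.1 → ω ∈ TrE n b.1 a.1 →
      Relation.ReflTransGen (TStep ω) a b := by
  intro k
  induction k with
  | zero =>
    intro a b hk hba _
    have hlen : b.1.length = a.1.length := by have := hba.length_le; omega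
    have : b = a := Subtype.ext (hba.eq_of_length hlen)
    rw [this]
  | succ k ih =>
    intro a b hk hba hTr
    by_cases he : b.1 = a.1
    · rw [Subtype.ext he]
    · have hlt : b.1.length < a.1.length :=
        lt_of_le_of_ne hba.length_le (fun hl => he (hba.eq_of_length hl))
      have hane : a.1 ≠ [] := by
        intro h0; rw [h0] at hlt; simp at hlt
      have han : a.1.length ≤ n := a.2
      set a' : Vtx n := ⟨a.1.dropLast, le_trans (List.dropLast_prefix _).length_le a.2⟩ with ha'
      have hstep : TStep ω a a' := ⟨⟨a.1, hane, han⟩, Or.inl ⟨hTr _ List.prefix_rfl hlt, rfl, rfl⟩⟩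
      refine Relation.ReflTransGen.head hstep (ih a' b ?_ ?_ ?_)
      · have : a'.1.length = a.1.length - 1 := by simp [ha']
        omega
      · exact prefix_dropLast hba hlt
      · intro u hu hl
        exact hTr u (hu.trans (List.dropLast_prefix _)) hl

lemma walk_down {n : ℕ} (ω : Edg n → Bool) :
    ∀ k (a b : Vtx n), b.1.length ≤ k → a.1 <+: b.1 → ω ∈ FlE n a.1 b.1 →
      Relation.ReflTransGen (TStep ω) a b := by
  intro k
  induction k with
  | zero =>
    intro a b hk hab _
    have hlen : a.1.length = b.1.length := by have := hab.length_le; omega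
    have : a = b := Subtype.ext (hab.eq_of_length hlen)
    rw [this]
  | succ k ih =>
    intro a b hk hab hFl
    by_cases he : a.1 = b.1
    · rw [Subtype.ext he]
    · have hlt : a.1.length < b.1.length :=
        lt_of_le_of_ne hab.length_le (fun hl => he (hab.eq_of_length hl))
      have hbne : b.1 ≠ [] := by
        intro h0; rw [h0] at hlt; simp at hlt
      have hbn : b.1.length ≤ n := b.2
      set b' : Vtx n := ⟨b.1.dropLast, le_trans (List.dropLast_prefix _).length_le b.2⟩ with hb'
      have hstep : TStep ω b' b := ⟨⟨b.1, hbne, hbn⟩, Or.inr ⟨hFl _ List.prefix_rfl hlt, rfl, rfl⟩⟩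
      refine Relation.ReflTransGen.tail (ih a b' ?_ ?_ ?_) hstep
      · have : b'.1.length = b.1.length - 1 := by simp [hb']
        omega
      · exact prefix_dropLast hab hlt
      · intro u hu hl
        exact hFl u (hu.trans (List.dropLast_prefix _)) hl

theorem xwet_iff {n : ℕ} (v : Vtx n) (ω : Edg n → Bool) :
    ω ∈ Xwet v ↔ ∃ m, m <+: v.1 ∧ ω ∈ YD n m ∩ FlE n m v.1 := by
  constructor
  · rintro ⟨w, hwlen, hwalk⟩
    obtain ⟨m, hma, hmv, hTr, hFl⟩ := inv_of_walk ω w v hwalk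
    exact ⟨m, hmv, ⟨w.1, hwlen, hma, hTr⟩, hFl⟩
  · rintro ⟨m, hmv, ⟨w, hwlen, hmw, hTr⟩, hFl⟩
    have hwn : w.length ≤ n := le_of_eq hwlen
    have hmn : m.length ≤ n := le_trans hmv.length_le v.2
    refine ⟨⟨w, hwn⟩, hwlen, ?_⟩
    exact (walk_up ω w.length ⟨w, hwn⟩ ⟨m, hmn⟩ le_rfl hmw hTr).trans
      (walk_down ω v.1.length ⟨m, hmn⟩ v le_rfl hmv hFl)

section MeasureTools

variable {n : ℕ} {p : ℝ}

lemma bern_true (hp0 : 0 ≤ p) : bern p ({true} : Set Bool) = ENNReal.ofReal p := by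
  simp [bern, Measure.dirac_apply]

lemma bern_false : bern p ({false} : Set Bool) = ENNReal.ofReal (1 - p) := by
  simp [bern, Measure.dirac_apply]

lemma bern_prob (hp0 : 0 ≤ p) (hp1 : p ≤ 1) : IsProbabilityMeasure (bern p) := by
  constructor
  simp only [bern, Measure.add_apply, Measure.smul_apply, smul_eq_mul]
  rw [Measure.dirac_apply _ _, Measure.dirac_apply _ _]
  simp only [Set.indicator_of_mem (Set.mem_univ _), Pi.one_apply, mul_one]
  rw [← ENNReal.ofReal_add hp0 (by linarith)]
  norm_num

lemma tree_prob (hp0 : 0 ≤ p) (hp1 : p ≤ 1) : IsProbabilityMeasure (treeMeasure n p) := by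
  haveI := bern_prob hp0 hp1
  show IsProbabilityMeasure (Measure.pi fun _ : Edg n => bern p)
  infer_instance

/-- real-valued probability -/
noncomputable def Pr (n : ℕ) (p : ℝ) (A : Set (Edg n → Bool)) : ℝ := (treeMeasure n p A).toReal

lemma Pr_nonneg (A : Set (Edg n → Bool)) : 0 ≤ Pr n p A := ENNReal.toReal_nonneg

lemma Pr_le_one (hp0 : 0 ≤ p) (hp1 : p ≤ 1) (A : Set (Edg n → Bool)) : Pr n p A ≤ 1 := by
  haveI := tree_prob (n := n) hp0 hp1
  have h := prob_le_one (μ := treeMeasure n p) (s := A)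
  calc (treeMeasure n p A).toReal ≤ (1 : ENNReal).toReal := ENNReal.toReal_mono (by simp) h
    _ = 1 := by simp

lemma Pr_mono (hp0 : 0 ≤ p) (hp1 : p ≤ 1) {A B : Set (Edg n → Bool)} (h : A ⊆ B) :
    Pr n p A ≤ Pr n p B := by
  haveI := tree_prob (n := n) hp0 hp1
  exact ENNReal.toReal_mono (measure_ne_top _ _) (measure_mono h)

lemma Pr_union_le (hp0 : 0 ≤ p) (hp1 : p ≤ 1) (A B : Set (Edg n → Bool)) :
    Pr n p (A ∪ B) ≤ Pr n p A + Pr n p B := by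
  haveI := tree_prob (n := n) hp0 hp1
  calc (treeMeasure n p (A ∪ B)).toReal
      ≤ ((treeMeasure n p A) + (treeMeasure n p B)).toReal :=
        ENNReal.toReal_mono (by simp [ENNReal.add_ne_top, measure_ne_top]) (measure_union_le A B)
    _ = Pr n p A + Pr n p B := ENNReal.toReal_add (measure_ne_top _ _) (measure_ne_top _ _)

lemma Pr_biUnion_le (hp0 : 0 ≤ p) (hp1 : p ≤ 1) {ι : Type*} (s : Finset ι)
    (f : ι → Set (Edg n → Bool)) :
    Pr n p (⋃ i ∈ s, f i) ≤ ∑ i ∈ s, Pr n p (f i) := by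
  haveI := tree_prob (n := n) hp0 hp1
  calc (treeMeasure n p (⋃ i ∈ s, f i)).toReal
      ≤ (∑ i ∈ s, treeMeasure n p (f i)).toReal :=
        ENNReal.toReal_mono (by
          rw [ENNReal.sum_ne_top]
          intro i _
          exact measure_ne_top _ _) (measure_biUnion_finset_le s f)
    _ = ∑ i ∈ s, Pr n p (f i) := ENNReal.toReal_sum (fun i _ => measure_ne_top _ _)

lemma Pr_compl (hp0 : 0 ≤ p) (hp1 : p ≤ 1) (A : Set (Edg n → Bool)) :
    Pr n p Aᶜ = 1 - Pr n p A := by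
  haveI := tree_prob (n := n) hp0 hp1
  rw [Pr, measure_compl (A.toFinite.measurableSet) (measure_ne_top _ _), measure_univ,
    ENNReal.toReal_sub_of_le prob_le_one (by simp)]
  simp [Pr]

lemma tree_cyl (hp0 : 0 ≤ p) (hp1 : p ≤ 1) (T : Finset (Edg n)) (f : Edg n → Bool) :
    treeMeasure n p {ω | ∀ e ∈ T, ω e = f e} = ∏ e ∈ T, bern p ({f e} : Set Bool) := by
  classical
  haveI := bern_prob hp0 hp1
  have hset : {ω : Edg n → Bool | ∀ e ∈ T, ω e = f e} =
      Set.univ.pi (fun e => if e ∈ T then ({f e} : Set Bool) else Set.univ) := by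
    ext ω
    simp only [Set.mem_setOf_eq, Set.mem_pi, Set.mem_univ, true_implies]
    constructor
    · intro h e
      by_cases he : e ∈ T
      · simp [he, h e he]
      · simp [he]
    · intro h e he
      have h2 := h e
      simp only [he, if_true, Set.mem_singleton_iff] at h2
      exact h2
  rw [hset]
  show Measure.pi (fun _ : Edg n => bern p) _ = _
  rw [Measure.pi_pi]
  have hval : ∀ e : Edg n, (bern p) (if e ∈ T then ({f e} : Set Bool) else Set.univ) =
      if e ∈ T then bern p {f e} else 1 := by
    intro e
    split_ifs with h
    · rfl
    · exact measure_univ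
  rw [Finset.prod_congr rfl (fun e _ => hval e), Finset.prod_ite_mem, Finset.univ_inter]

lemma Pr_cyl (hp0 : 0 ≤ p) (hp1 : p ≤ 1) (T : Finset (Edg n)) (f : Edg n → Bool) :
    Pr n p {ω | ∀ e ∈ T, ω e = f e} = ∏ e ∈ T, (if f e then p else 1 - p) := by
  rw [Pr, tree_cyl hp0 hp1, ENNReal.toReal_prod]
  refine Finset.prod_congr rfl fun e _ => ?_
  cases hfe : f e
  · simp [bern_false, ENNReal.toReal_ofReal (by linarith : (0:ℝ) ≤ 1 - p)]
  · simp [bern_true hp0, ENNReal.toReal_ofReal hp0]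

lemma det_split (hp0 : 0 ≤ p) (hp1 : p ≤ 1) (S : Set (Edg n)) (A B : Set (Edg n → Bool))
    (hA : ∀ ω ω' : Edg n → Bool, (∀ e ∈ S, ω e = ω' e) → ω ∈ A → ω' ∈ A)
    (hB : ∀ ω ω' : Edg n → Bool, (∀ e ∉ S, ω e = ω' e) → ω ∈ B → ω' ∈ B) :
    treeMeasure n p (A ∩ B) = treeMeasure n p A * treeMeasure n p B := by
  classical
  haveI := bern_prob hp0 hp1
  set φ := MeasurableEquiv.piEquivPiSubtypeProd (fun _ : Edg n => Bool) (· ∈ S) with hφdef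
  have hmp := measurePreserving_piEquivPiSubtypeProd (fun _ : Edg n => bern p) (· ∈ S)
  set ν₁ : Measure ({e : Edg n // e ∈ S} → Bool) := Measure.pi fun _ => bern p with hν₁
  set ν₂ : Measure ({e : Edg n // ¬ e ∈ S} → Bool) := Measure.pi fun _ => bern p with hν₂
  haveI : IsProbabilityMeasure ν₁ := by rw [hν₁]; infer_instance
  haveI : IsProbabilityMeasure ν₂ := by rw [hν₂]; infer_instance
  set A₁ : Set ({e : Edg n // e ∈ S} → Bool) := (fun ω (e : {e : Edg n // e ∈ S}) => ω e.1) '' A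
    with hA₁
  set B₁ : Set ({e : Edg n // ¬ e ∈ S} → Bool) := (fun ω (e : {e : Edg n // ¬ e ∈ S}) => ω e.1) '' B
    with hB₁
  have hAeq : A = φ ⁻¹' (A₁ ×ˢ Set.univ) := by
    ext ω
    simp only [Set.mem_preimage, Set.mem_prod, Set.mem_univ, and_true, hA₁, Set.mem_image]
    constructor
    · intro hω; exact ⟨ω, hω, rfl⟩
    · rintro ⟨ω', hω', hproj⟩
      exact hA ω' ω (fun e he => congrFun hproj ⟨e, he⟩) hω'
  have hBeq : B = φ ⁻¹' (Set.univ ×ˢ B₁) := by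
    ext ω
    simp only [Set.mem_preimage, Set.mem_prod, Set.mem_univ, true_and, hB₁, Set.mem_image]
    constructor
    · intro hω; exact ⟨ω, hω, rfl⟩
    · rintro ⟨ω', hω', hproj⟩
      exact hB ω' ω (fun e he => congrFun hproj ⟨e, he⟩) hω'
  have key : ∀ s : Set (({e : Edg n // e ∈ S} → Bool) × ({e : Edg n // ¬ e ∈ S} → Bool)),
      treeMeasure n p (φ ⁻¹' s) = (ν₁.prod ν₂) s := by
    intro s
    have hms : MeasurableSet s := s.toFinite.measurableSet
    show Measure.pi (fun _ : Edg n => bern p) (φ ⁻¹' s) = _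
    rw [← Measure.map_apply φ.measurable hms, hmp.map_eq]
  have hprod : A ∩ B = φ ⁻¹' (A₁ ×ˢ B₁) := by
    rw [hAeq, hBeq, ← Set.preimage_inter, Set.prod_inter_prod, Set.inter_univ, Set.univ_inter]
  rw [hprod, key, Measure.prod_prod, hAeq, hBeq, key, key, Measure.prod_prod,
    Measure.prod_prod, measure_univ, measure_univ, mul_one, one_mul]

lemma Pr_split (hp0 : 0 ≤ p) (hp1 : p ≤ 1) (S : Set (Edg n)) (A B : Set (Edg n → Bool))
    (hA : ∀ ω ω' : Edg n → Bool, (∀ e ∈ S, ω e = ω' e) → ω ∈ A → ω' ∈ A)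
    (hB : ∀ ω ω' : Edg n → Bool, (∀ e ∉ S, ω e = ω' e) → ω ∈ B → ω' ∈ B) :
    Pr n p (A ∩ B) = Pr n p A * Pr n p B := by
  rw [Pr, Pr, Pr, det_split hp0 hp1 S A B hA hB, ENNReal.toReal_mul]

end MeasureTools

section Bounds

variable {n : ℕ} {p : ℝ}

lemma geom_le_two {x : ℝ} (h0 : 0 ≤ x) (h2 : x ≤ 1/2) (k : ℕ) :
    ∑ j ∈ Finset.range k, x ^ j ≤ 2 := by
  induction k with
  | zero => norm_num
  | succ k ih =>
    rw [Finset.sum_range_succ']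
    have h1 : ∑ i ∈ Finset.range k, x ^ (i + 1) = (∑ i ∈ Finset.range k, x ^ i) * x := by
      rw [Finset.sum_mul]
      exact Finset.sum_congr rfl fun i _ => pow_succ x i
    rw [h1, pow_zero]
    have h2' : (0:ℝ) ≤ ∑ i ∈ Finset.range k, x ^ i :=
      Finset.sum_nonneg fun i _ => pow_nonneg h0 i
    nlinarith

lemma Pr_edge_true (hp0 : 0 ≤ p) (hp1 : p ≤ 1) (e : Edg n) :
    Pr n p {ω | ω e = true} = p := by
  have h : {ω : Edg n → Bool | ω e = true} =
      {ω | ∀ e' ∈ ({e} : Finset (Edg n)), ω e' = (fun _ => true) e'} := by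
    ext ω; simp
  rw [h, Pr_cyl hp0 hp1]
  simp

lemma YD_det (m : List Bool) (ω ω' : Edg n → Bool)
    (h : ∀ e : Edg n, m.length < e.1.length → ω e = ω' e) :
    ω ∈ YD n m → ω' ∈ YD n m := by
  rintro ⟨w, h1, h2, h3⟩
  exact ⟨w, h1, h2, fun u hu hl => by rw [← h u hl]; exact h3 u hu hl⟩

lemma Pr_true_and_YD (hp0 : 0 ≤ p) (hp1 : p ≤ 1) (c : List Bool) (hc1 : c ≠ [])
    (hc2 : c.length ≤ n) :
    Pr n p ({ω | ω ⟨c, hc1, hc2⟩ = true} ∩ YD n c) = p * Pr n p (YD n c) := by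
  rw [Pr_split hp0 hp1 {e : Edg n | e = ⟨c, hc1, hc2⟩} _ _ ?_ ?_]
  erw [Pr_edge_true hp0 hp1]
  · intro ω ω' hagree hω
    have h := hagree ⟨c, hc1, hc2⟩ rfl
    exact h.symm.trans hω
  · intro ω ω' hagree hω
    refine YD_det c ω ω' (fun e hl => hagree e ?_) hω
    intro hmem
    have : e.1 = c := congrArg Subtype.val hmem
    rw [this] at hl
    omega

lemma YD_le (hp0 : 0 < p) (hp1 : p ≤ 1) :
    ∀ k (m : List Bool), m.length ≤ n → n - m.length ≤ k →
      Pr n p (YD n m) ≤ (2*p) ^ (n - m.length) := by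
  intro k
  induction k with
  | zero =>
    intro m h1 h2
    have h3 : n - m.length = 0 := by omega
    rw [h3, pow_zero]
    exact Pr_le_one hp0.le hp1 _
  | succ k ih =>
    intro m h1 h2
    by_cases hnm : n - m.length = 0
    · rw [hnm, pow_zero]; exact Pr_le_one hp0.le hp1 _
    · have hlt : m.length < n := by omega
      have hlen : ∀ b : Bool, (m ++ [b]).length = m.length + 1 := by intro b; simp
      have hne : ∀ b : Bool, (m ++ [b]) ≠ [] := by intro b; simp
      have hlenn : ∀ b : Bool, (m ++ [b]).length ≤ n := by intro b; rw [hlen b]; omega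
      have hsub : YD n m ⊆
          ({ω | ω ⟨m ++ [false], hne false, hlenn false⟩ = true} ∩ YD n (m ++ [false])) ∪
          ({ω | ω ⟨m ++ [true], hne true, hlenn true⟩ = true} ∩ YD n (m ++ [true])) := by
        rintro ω ⟨w, hwl, hmw, hTr⟩
        obtain ⟨b, hb⟩ := take_succ_prefix_exists hmw (by omega)
        have hcw : m ++ [b] <+: w := hb ▸ List.take_prefix _ _
        have htrue : ω ⟨m ++ [b], hne b, hlenn b⟩ = true :=
          hTr ⟨m ++ [b], hne b, hlenn b⟩ hcw (by rw [hlen b]; omega)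
        have hyd : ω ∈ YD n (m ++ [b]) :=
          ⟨w, hwl, hcw, fun u hu hl => hTr u hu (by rw [hlen b] at hl; omega)⟩
        cases b
        · exact Or.inl ⟨htrue, hyd⟩
        · exact Or.inr ⟨htrue, hyd⟩
      have hih : ∀ b : Bool, Pr n p (YD n (m ++ [b])) ≤ (2*p) ^ (n - m.length - 1) := by
        intro b
        have := ih (m ++ [b]) (hlenn b) (by rw [hlen b]; omega)
        rw [hlen b] at this
        have he : n - (m.length + 1) = n - m.length - 1 := by omega
        rw [he] at this
        exact this
      calc Pr n p (YD n m) ≤ _ := Pr_mono hp0.le hp1 hsub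
        _ ≤ _ := Pr_union_le hp0.le hp1 _ _
        _ = p * Pr n p (YD n (m ++ [false])) + p * Pr n p (YD n (m ++ [true])) := by
            rw [Pr_true_and_YD hp0.le hp1 (m ++ [false]) (hne false) (hlenn false),
              Pr_true_and_YD hp0.le hp1 (m ++ [true]) (hne true) (hlenn true)]
        _ ≤ p * (2*p) ^ (n - m.length - 1) + p * (2*p) ^ (n - m.length - 1) := by
            have h4 := hih false
            have h5 := hih true
            have h6 : (0:ℝ) ≤ p := hp0.le
            nlinarith [Pr_nonneg (n := n) (p := p) (YD n (m ++ [false])),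
              Pr_nonneg (n := n) (p := p) (YD n (m ++ [true]))]
        _ = (2*p) ^ (n - m.length) := by
            have h8 : (2*p) ^ (n - m.length) = (2*p) ^ (n - m.length - 1) * (2 * p) := by
              rw [← pow_succ]
              congr 1
              omega
            rw [h8]; ring

lemma feed_le (hp0 : 0 < p) (hp1 : p ≤ 1) (m u : List Bool) (hmu : m <+: u) (hne : m ≠ u)
    (hun : u.length ≤ n) :
    Pr n p (YD n m ∩ FlE n m u) ≤ p * (2*p) ^ (n - m.length - 1) := by
  have hml : m.length < u.length :=
    lt_of_le_of_ne hmu.length_le (fun h => hne (hmu.eq_of_length h))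
  obtain ⟨b, hb⟩ := take_succ_prefix_exists hmu hml
  have hc'ne : m ++ [!b] ≠ [] := by simp
  have hc'len : (m ++ [!b]).length = m.length + 1 := by simp
  have hc'n : (m ++ [!b]).length ≤ n := by rw [hc'len]; omega
  have hsub : YD n m ∩ FlE n m u ⊆
      {ω | ω ⟨m ++ [!b], hc'ne, hc'n⟩ = true} ∩ YD n (m ++ [!b]) := by
    rintro ω ⟨⟨w, hwl, hmw, hTr⟩, hFl⟩
    obtain ⟨b', hb'⟩ := take_succ_prefix_exists hmw (by omega)
    have hcw : m ++ [b'] <+: w := hb' ▸ List.take_prefix _ _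
    have hbb : b' = !b := by
      by_contra hbb
      have hb'b : b' = b := by cases b <;> cases b' <;> simp_all
      subst hb'b
      have hcu : m ++ [b'] <+: u := hb ▸ List.take_prefix _ _
      have hft := hFl ⟨m ++ [b'], by simp, by simp; omega⟩ hcu (by simp)
      have htt := hTr ⟨m ++ [b'], by simp, by simp; omega⟩ hcw (by simp)
      rw [hft] at htt
      exact absurd htt (by simp)
    subst hbb
    constructor
    · exact hTr ⟨m ++ [!b], hc'ne, hc'n⟩ hcw (by simp)
    · exact ⟨w, hwl, hcw, fun u' hu' hl => hTr u' hu' (by rw [hc'len] at hl; omega)⟩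
  calc Pr n p (YD n m ∩ FlE n m u) ≤ _ := Pr_mono hp0.le hp1 hsub
    _ = p * Pr n p (YD n (m ++ [!b])) := Pr_true_and_YD hp0.le hp1 (m ++ [!b]) hc'ne hc'n
    _ ≤ p * (2*p) ^ (n - m.length - 1) := by
        have := YD_le hp0 hp1 (n - (m ++ [!b]).length) (m ++ [!b]) hc'n le_rfl
        rw [hc'len] at this
        have he : n - (m.length + 1) = n - m.length - 1 := by omega
        rw [he] at this
        nlinarith [Pr_nonneg (n := n) (p := p) (YD n (m ++ [!b])),
          pow_nonneg (by linarith : (0:ℝ) ≤ 2*p) (n - m.length - 1)]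

lemma xwet_subset_biUnion (v : Vtx n) :
    Xwet v ⊆ ⋃ j ∈ Finset.range (v.1.length + 1),
      (YD n (v.1.take j) ∩ FlE n (v.1.take j) v.1) := by
  intro ω hω
  obtain ⟨m, hmv, hYF⟩ := (xwet_iff v ω).1 hω
  have htake : v.1.take m.length = m := by
    obtain ⟨t, ht⟩ := hmv
    rw [← ht, List.take_left]
  refine Set.mem_iUnion.2 ⟨m.length, Set.mem_iUnion.2 ⟨?_, ?_⟩⟩
  · exact Finset.mem_range.2 (by have := hmv.length_le; omega)
  · rw [htake]; exact hYF

lemma YD_subset_xwet (v : Vtx n) : YD n v.1 ⊆ Xwet v := by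
  intro ω h
  refine (xwet_iff v ω).2 ⟨v.1, List.prefix_rfl, h, fun u hu hl => ?_⟩
  exact absurd hu.length_le (by omega)

lemma X_le_aux (hp0 : 0 < p) (hp14 : p ≤ 1/4) (v : Vtx n) :
    Pr n p (Xwet v) ≤ Pr n p (YD n v.1) + 2 * p * (2*p) ^ (n - v.1.length) := by
  have hp1 : p ≤ 1 := by linarith
  have h2p : 0 ≤ 2*p := by linarith
  calc Pr n p (Xwet v) ≤ _ := Pr_mono hp0.le hp1 (xwet_subset_biUnion v)
    _ ≤ ∑ j ∈ Finset.range (v.1.length + 1),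
        Pr n p (YD n (v.1.take j) ∩ FlE n (v.1.take j) v.1) := Pr_biUnion_le hp0.le hp1 _ _
    _ = (∑ j ∈ Finset.range v.1.length,
          Pr n p (YD n (v.1.take j) ∩ FlE n (v.1.take j) v.1)) +
        Pr n p (YD n (v.1.take v.1.length) ∩ FlE n (v.1.take v.1.length) v.1) :=
        Finset.sum_range_succ _ _
    _ ≤ (∑ j ∈ Finset.range v.1.length, p * (2*p) ^ (n - j - 1)) + Pr n p (YD n v.1) := by
        gcongr with j hj
        · rw [Finset.mem_range] at hj
          have hlt : (v.1.take j).length = j := by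
            rw [List.length_take]; omega
          have := feed_le hp0 hp1 (v.1.take j) v.1 (List.take_prefix _ _)
            (fun h => by rw [h] at hlt; omega) v.2
          rw [hlt] at this
          exact this
        · rw [List.take_length]
          exact Pr_mono hp0.le hp1 Set.inter_subset_left
    _ ≤ 2 * p * (2*p) ^ (n - v.1.length) + Pr n p (YD n v.1) := by
        gcongr ?_ + _
        have hrefl := Finset.sum_range_reflect (fun j => p * (2*p) ^ (n - j - 1)) v.1.length
        rw [← hrefl]
        have hterm : ∀ j ∈ Finset.range v.1.length,
            p * (2*p) ^ (n - (v.1.length - 1 - j) - 1) =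
            p * (2*p) ^ (n - v.1.length) * (2*p) ^ j := by
          intro j hj
          rw [Finset.mem_range] at hj
          have hvn := v.2
          have he : n - (v.1.length - 1 - j) - 1 = (n - v.1.length) + j := by omega
          rw [he, pow_add]
          ring
        rw [Finset.sum_congr rfl hterm, ← Finset.mul_sum]
        have hgeom := geom_le_two h2p (by linarith) v.1.length
        have hpow : (0:ℝ) ≤ p * (2*p) ^ (n - v.1.length) :=
          mul_nonneg hp0.le (pow_nonneg h2p _)
        nlinarith
    _ = Pr n p (YD n v.1) + 2 * p * (2*p) ^ (n - v.1.length) := by ring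

lemma X_le (hp0 : 0 < p) (hp14 : p ≤ 1/4) (v : Vtx n) :
    Pr n p (Xwet v) ≤ 2 * (2*p) ^ (n - v.1.length) := by
  have hp1 : p ≤ 1 := by linarith
  have h1 := X_le_aux hp0 hp14 v
  have h2 := YD_le hp0 hp1 (n - v.1.length) v.1 v.2 le_rfl
  have h3 : (0:ℝ) ≤ (2*p) ^ (n - v.1.length) := pow_nonneg (by linarith) _
  nlinarith

end Bounds

section PairBounds

variable {n : ℕ} {p : ℝ}

lemma YD_lvl1 (hp0 : 0 < p) (hp1 : p ≤ 1) (v : List Bool) (hn : 1 ≤ n)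
    (hv : v.length = n - 1) : Pr n p (YD n v) = 1 - (1-p)^2 := by
  classical
  have hlen : ∀ b : Bool, (v ++ [b]).length = n := by intro b; simp; omega
  have hne2 : ∀ b : Bool, (v ++ [b]) ≠ [] := by intro b; simp
  have hlenn : ∀ b : Bool, (v ++ [b]).length ≤ n := fun b => le_of_eq (hlen b)
  have hEd : (⟨v ++ [true], hne2 true, hlenn true⟩ : Edg n) ≠
      ⟨v ++ [false], hne2 false, hlenn false⟩ := by
    intro h
    have := congrArg Subtype.val h
    simp at this
  have hYD : YD n v = ({ω : Edg n → Bool |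
      ∀ e ∈ ({⟨v ++ [true], hne2 true, hlenn true⟩,
              ⟨v ++ [false], hne2 false, hlenn false⟩} : Finset (Edg n)),
        ω e = (fun _ => false) e})ᶜ := by
    ext ω
    simp only [Set.mem_compl_iff, Set.mem_setOf_eq]
    constructor
    · rintro ⟨w, hwl, hmw, hTr⟩ hall
      obtain ⟨b, hb⟩ := take_succ_prefix_exists hmw (by omega)
      have hw' : w = v ++ [b] := by
        rw [← hb, List.take_of_length_le (by omega)]
      have htr := hTr ⟨v ++ [b], hne2 b, hlenn b⟩ (by rw [hw']) (by simp)
      cases b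
      · have hfalse := hall ⟨v ++ [false], hne2 false, hlenn false⟩ (Finset.mem_insert_of_mem (Finset.mem_singleton_self _))
        rw [hfalse] at htr; exact absurd htr (by simp)
      · have hfalse := hall ⟨v ++ [true], hne2 true, hlenn true⟩ (Finset.mem_insert_self _ _)
        rw [hfalse] at htr; exact absurd htr (by simp)
    · intro h
      push_neg at h
      obtain ⟨e, he, hetrue⟩ := h
      have hetrue' : ω e = true := by
        cases he' : ω e
        · exact absurd he' hetrue
        · rfl
      replace he : e = ⟨v ++ [true], hne2 true, hlenn true⟩ ∨ e = ⟨v ++ [false], hne2 false, hlenn false⟩ := by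
        rcases Finset.mem_insert.1 he with h | h
        · exact Or.inl h
        · exact Or.inr (Finset.mem_singleton.1 h)
      rcases he with rfl | rfl
      · refine ⟨v ++ [true], hlen true, List.prefix_append _ _, fun u hu hl => ?_⟩
        have hu1 : u.1 = v ++ [true] :=
          hu.eq_of_length (by have := hu.length_le; simp at this ⊢; omega)
        have h2 : u = ⟨v ++ [true], hne2 true, hlenn true⟩ := Subtype.ext hu1
        rw [h2]; exact hetrue'
      · refine ⟨v ++ [false], hlen false, List.prefix_append _ _, fun u hu hl => ?_⟩
        have hu1 : u.1 = v ++ [false] :=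
          hu.eq_of_length (by have := hu.length_le; simp at this ⊢; omega)
        have h2 : u = ⟨v ++ [false], hne2 false, hlenn false⟩ := Subtype.ext hu1
        rw [h2]; exact hetrue'
  rw [hYD, Pr_compl hp0.le hp1, Pr_cyl hp0.le hp1]
  have hfac : ∀ e ∈ ({⟨v ++ [true], hne2 true, hlenn true⟩,
              ⟨v ++ [false], hne2 false, hlenn false⟩} : Finset (Edg n)),
      (if (fun _ : Edg n => false) e then p else 1 - p) = 1 - p := by
    intro e _; norm_num
  rw [Finset.prod_congr rfl hfac, Finset.prod_const]
  congr 2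
  exact Finset.card_pair hEd

lemma X_lvl1_bounds (hp0 : 0 < p) (hp14 : p ≤ 1/4) (v : Vtx n) (hn : 1 ≤ n)
    (hv : v.1.length = n - 1) : |Pr n p (Xwet v) - 2*p| ≤ 4 * p^2 := by
  have hp1 : p ≤ 1 := by linarith
  have hYD1 : Pr n p (YD n v.1) = 1 - (1-p)^2 := YD_lvl1 hp0 hp1 v.1 hn hv
  have hlow : Pr n p (YD n v.1) ≤ Pr n p (Xwet v) := Pr_mono hp0.le hp1 (YD_subset_xwet v)
  have hup := X_le_aux hp0 hp14 v
  have hℓ : n - v.1.length = 1 := by have := v.2; omega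
  rw [hℓ] at hup
  rw [hYD1] at hup hlow
  rw [pow_one] at hup
  rw [abs_le]
  constructor <;> nlinarith [sq_nonneg p]

/-- local part of the wet event: witnessing prefix longer than `k` -/
def AEv (n : ℕ) (v : List Bool) (k : ℕ) : Set (Edg n → Bool) :=
  {ω | ∃ m, m <+: v ∧ k < m.length ∧ ω ∈ YD n m ∩ FlE n m v}

/-- remote part of the wet event: witnessing prefix of length at most `k` -/
def REv (n : ℕ) (v : List Bool) (k : ℕ) : Set (Edg n → Bool) :=
  {ω | ∃ m, m <+: v ∧ m.length ≤ k ∧ ω ∈ YD n m ∩ FlE n m v}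

lemma xwet_eq_AR (v : Vtx n) (k : ℕ) : Xwet v = AEv n v.1 k ∪ REv n v.1 k := by
  ext ω
  rw [Set.mem_union]
  constructor
  · intro h
    obtain ⟨m, h1, h2⟩ := (xwet_iff v ω).1 h
    by_cases hk : k < m.length
    · exact Or.inl ⟨m, h1, hk, h2⟩
    · exact Or.inr ⟨m, h1, by omega, h2⟩
  · rintro (⟨m, h1, _, h2⟩ | ⟨m, h1, _, h2⟩) <;> exact (xwet_iff v ω).2 ⟨m, h1, h2⟩

lemma REv_le (hp0 : 0 < p) (hp14 : p ≤ 1/4) (v : Vtx n) (k : ℕ) (hk : k < v.1.length) :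
    Pr n p (REv n v.1 k) ≤ (2*p) ^ (n - k) := by
  have hp1 : p ≤ 1 := by linarith
  have hsub : REv n v.1 k ⊆ ⋃ j ∈ Finset.range (k+1),
      (YD n (v.1.take j) ∩ FlE n (v.1.take j) v.1) := by
    rintro ω ⟨m, h1, h2, h3⟩
    have htake : v.1.take m.length = m := by obtain ⟨t, ht⟩ := h1; rw [← ht, List.take_left]
    exact Set.mem_iUnion.2 ⟨m.length, Set.mem_iUnion.2
      ⟨Finset.mem_range.2 (by omega), by rw [htake]; exact h3⟩⟩
  have hkn' : k < n := lt_of_lt_of_le hk v.2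
  have hkn : k ≤ n - 1 := by omega
  calc Pr n p (REv n v.1 k) ≤ _ := Pr_mono hp0.le hp1 hsub
    _ ≤ ∑ j ∈ Finset.range (k+1), Pr n p (YD n (v.1.take j) ∩ FlE n (v.1.take j) v.1) :=
        Pr_biUnion_le hp0.le hp1 _ _
    _ ≤ ∑ j ∈ Finset.range (k+1), p * (2*p) ^ (n - j - 1) := by
        refine Finset.sum_le_sum fun j hj => ?_
        rw [Finset.mem_range] at hj
        have hlt : (v.1.take j).length = j := by rw [List.length_take]; omega
        have hfe := feed_le hp0 hp1 (v.1.take j) v.1 (List.take_prefix _ _)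
          (fun h => by rw [h] at hlt; omega) v.2
        rw [hlt] at hfe; exact hfe
    _ ≤ (2*p) ^ (n - k) := by
        have hrefl := Finset.sum_range_reflect (fun j => p * (2*p) ^ (n - j - 1)) (k+1)
        rw [← hrefl]
        have hterm : ∀ j ∈ Finset.range (k+1),
            p * (2*p) ^ (n - (k + 1 - 1 - j) - 1) = p * (2*p) ^ (n - 1 - k) * (2*p) ^ j := by
          intro j hj; rw [Finset.mem_range] at hj
          have he : n - (k + 1 - 1 - j) - 1 = (n - 1 - k) + j := by omega
          rw [he, pow_add]; ring
        rw [Finset.sum_congr rfl hterm, ← Finset.mul_sum]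
        have hgeom := geom_le_two (by linarith : (0:ℝ) ≤ 2*p) (by linarith) (k+1)
        have hgeom0 : (0:ℝ) ≤ ∑ j ∈ Finset.range (k+1), (2*p) ^ j :=
          Finset.sum_nonneg fun j _ => pow_nonneg (by linarith) j
        have hsucc : (2*p) ^ (n - k) = (2*p) ^ (n - 1 - k) * (2*p) := by
          rw [← pow_succ]; congr 1; omega
        rw [hsucc]
        have hpow : (0:ℝ) ≤ (2*p) ^ (n - 1 - k) := pow_nonneg (by linarith) _
        have hmul : (p * (2*p) ^ (n-1-k)) * (∑ j ∈ Finset.range (k+1), (2*p)^j) ≤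
            (p * (2*p)^(n-1-k)) * 2 :=
          mul_le_mul_of_nonneg_left hgeom (mul_nonneg hp0.le hpow)
        nlinarith

lemma AEv_det (v : List Bool) (k : ℕ) (hkv : k < v.length) (hvn : v.length ≤ n)
    (ω ω' : Edg n → Bool)
    (h : ∀ e : Edg n, v.take (k+1) <+: e.1 → ω e = ω' e) :
    ω ∈ AEv n v k → ω' ∈ AEv n v k := by
  rintro ⟨m, h1, h2, ⟨w, hw1, hw2, hw3⟩, h4⟩
  have hcm : v.take (k+1) <+: m := by
    refine List.prefix_of_prefix_length_le (List.take_prefix _ _) h1 ?_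
    rw [List.length_take]; omega
  refine ⟨m, h1, h2, ⟨w, hw1, hw2, fun u hu hl => ?_⟩, fun u hu hl => ?_⟩
  · have hcu : v.take (k+1) <+: u.1 := by
      refine List.prefix_of_prefix_length_le (hcm.trans hw2) hu ?_
      rw [List.length_take]; omega
    rw [← h u hcu]; exact hw3 u hu hl
  · have hcu : v.take (k+1) <+: u.1 := by
      refine List.prefix_of_prefix_length_le (List.take_prefix _ _) hu ?_
      rw [List.length_take]; omega
    rw [← h u hcu]; exact h4 u hu hl

lemma pair_bound (hp0 : 0 < p) (hp14 : p ≤ 1/4) (u v : Vtx n)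
    (hun : u.1.length < n) (hvn : v.1.length < n) (huv : u.1 ≠ v.1) :
    |Pr n p (Xwet u ∩ Xwet v) - Pr n p (Xwet u) * Pr n p (Xwet v)| ≤
      4 * (2*p) ^ (n - (lcp u.1 v.1).length) := by
  have hp1 : p ≤ 1 := by linarith
  have hq1u := Pr_le_one (n := n) hp0.le hp1 (Xwet u)
  have hq1v := Pr_le_one (n := n) hp0.le hp1 (Xwet v)
  have hq0u := Pr_nonneg (n := n) (p := p) (Xwet u)
  have hq0v := Pr_nonneg (n := n) (p := p) (Xwet v)
  have hi0 := Pr_nonneg (n := n) (p := p) (Xwet u ∩ Xwet v)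
  by_cases hc1 : u.1 <+: v.1
  · rw [lcp_eq_left hc1]
    have hPuv : Pr n p (Xwet u ∩ Xwet v) ≤ Pr n p (Xwet u) :=
      Pr_mono hp0.le hp1 Set.inter_subset_left
    have hXu := X_le hp0 hp14 u
    have hpw : (0:ℝ) ≤ (2*p) ^ (n - u.1.length) := pow_nonneg (by linarith) _
    rw [abs_le]
    constructor <;> nlinarith
  · by_cases hc2 : v.1 <+: u.1
    · rw [lcp_eq_right hc2]
      have hPuv : Pr n p (Xwet u ∩ Xwet v) ≤ Pr n p (Xwet v) :=
        Pr_mono hp0.le hp1 Set.inter_subset_right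
      have hXv := X_le hp0 hp14 v
      have hpw : (0:ℝ) ≤ (2*p) ^ (n - v.1.length) := pow_nonneg (by linarith) _
      rw [abs_le]
      constructor <;> nlinarith
    · -- incomparable
      have hm0u : lcp u.1 v.1 <+: u.1 := lcp_prefix_left _ _
      have hm0v : lcp u.1 v.1 <+: v.1 := lcp_prefix_right _ _
      set k := (lcp u.1 v.1).length with hk
      have hku : k < u.1.length := by
        rcases lt_or_eq_of_le hm0u.length_le with h | h
        · exact h
        · exact absurd (hm0u.eq_of_length h ▸ hm0v) hc1
      have hkv : k < v.1.length := by
        rcases lt_or_eq_of_le hm0v.length_le with h | h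
        · exact h
        · exact absurd (hm0v.eq_of_length h ▸ hm0u) hc2
      have hcne : u.1.take (k+1) ≠ v.1.take (k+1) := by
        intro he
        have hcp : u.1.take (k+1) <+: lcp u.1 v.1 :=
          prefix_lcp u.1 (u.1.take (k+1)) v.1 (List.take_prefix _ _)
            (he ▸ List.take_prefix _ _)
        have := hcp.length_le
        rw [List.length_take] at this
        omega
      have hlenu : (u.1.take (k+1)).length = k+1 := by rw [List.length_take]; omega
      have hlenv : (v.1.take (k+1)).length = k+1 := by rw [List.length_take]; omega
      have hsplit : Pr n p (AEv n u.1 k ∩ AEv n v.1 k) =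
          Pr n p (AEv n u.1 k) * Pr n p (AEv n v.1 k) := by
        refine Pr_split hp0.le hp1 {e : Edg n | u.1.take (k+1) <+: e.1} _ _ ?_ ?_
        · intro ω ω' hagree hω
          exact AEv_det u.1 k hku u.2 ω ω' (fun e he => hagree e he) hω
        · intro ω ω' hagree hω
          refine AEv_det v.1 k hkv v.2 ω ω' (fun e he => hagree e ?_) hω
          intro hmem
          have h1 : u.1.take (k+1) <+: v.1.take (k+1) :=
            List.prefix_of_prefix_length_le hmem he (by rw [hlenu, hlenv])
          exact hcne (h1.eq_of_length (by rw [hlenu, hlenv]))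
      have hAXu : AEv n u.1 k ⊆ Xwet u := by
        rw [xwet_eq_AR u k]; exact Set.subset_union_left
      have hAXv : AEv n v.1 k ⊆ Xwet v := by
        rw [xwet_eq_AR v k]; exact Set.subset_union_left
      have hqau : Pr n p (Xwet u) ≤ Pr n p (AEv n u.1 k) + Pr n p (REv n u.1 k) := by
        calc Pr n p (Xwet u) = Pr n p (AEv n u.1 k ∪ REv n u.1 k) := by rw [← xwet_eq_AR u k]
          _ ≤ _ := Pr_union_le hp0.le hp1 _ _
      have hqav : Pr n p (Xwet v) ≤ Pr n p (AEv n v.1 k) + Pr n p (REv n v.1 k) := by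
        calc Pr n p (Xwet v) = Pr n p (AEv n v.1 k ∪ REv n v.1 k) := by rw [← xwet_eq_AR v k]
          _ ≤ _ := Pr_union_le hp0.le hp1 _ _
      have hau : Pr n p (AEv n u.1 k) ≤ Pr n p (Xwet u) := Pr_mono hp0.le hp1 hAXu
      have hav : Pr n p (AEv n v.1 k) ≤ Pr n p (Xwet v) := Pr_mono hp0.le hp1 hAXv
      have hlowint : Pr n p (AEv n u.1 k ∩ AEv n v.1 k) ≤ Pr n p (Xwet u ∩ Xwet v) :=
        Pr_mono hp0.le hp1 (Set.inter_subset_inter hAXu hAXv)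
      have hsub2 : Xwet u ∩ Xwet v ⊆
          (AEv n u.1 k ∩ AEv n v.1 k) ∪ (REv n u.1 k ∪ REv n v.1 k) := by
        rintro ω ⟨h1, h2⟩
        rw [xwet_eq_AR u k] at h1
        rw [xwet_eq_AR v k] at h2
        rcases h1 with h1 | h1
        · rcases h2 with h2 | h2
          · exact Or.inl ⟨h1, h2⟩
          · exact Or.inr (Or.inr h2)
        · exact Or.inr (Or.inl h1)
      have hupint : Pr n p (Xwet u ∩ Xwet v) ≤
          Pr n p (AEv n u.1 k ∩ AEv n v.1 k) + (Pr n p (REv n u.1 k) + Pr n p (REv n v.1 k)) := by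
        calc Pr n p (Xwet u ∩ Xwet v) ≤ _ := Pr_mono hp0.le hp1 hsub2
          _ ≤ Pr n p (AEv n u.1 k ∩ AEv n v.1 k) + Pr n p (REv n u.1 k ∪ REv n v.1 k) :=
              Pr_union_le hp0.le hp1 _ _
          _ ≤ _ := by
              have := Pr_union_le (n := n) hp0.le hp1 (REv n u.1 k) (REv n v.1 k)
              linarith
      have hru := REv_le hp0 hp14 u k hku
      have hrv := REv_le hp0 hp14 v k hkv
      have hru0 := Pr_nonneg (n := n) (p := p) (REv n u.1 k)
      have hrv0 := Pr_nonneg (n := n) (p := p) (REv n v.1 k)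
      have hau0 := Pr_nonneg (n := n) (p := p) (AEv n u.1 k)
      have hav0 := Pr_nonneg (n := n) (p := p) (AEv n v.1 k)
      have hau1 : Pr n p (AEv n u.1 k) ≤ 1 := le_trans hau hq1u
      have hav1 : Pr n p (AEv n v.1 k) ≤ 1 := le_trans hav hq1v
      have hpw : (0:ℝ) ≤ (2*p) ^ (n - k) := pow_nonneg (by linarith) _
      rw [abs_le]
      constructor
      · nlinarith
      · nlinarith
end PairBounds

section Counting

variable {n : ℕ}

/-- words of length exactly `j` -/
noncomputable def WF (j : ℕ) : Finset (List Bool) :=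
  (Finset.univ : Finset (Fin j → Bool)).image List.ofFn

lemma mem_WF {j : ℕ} {l : List Bool} : l ∈ WF j ↔ l.length = j := by
  constructor
  · intro h
    obtain ⟨f, _, rfl⟩ := Finset.mem_image.1 h
    simp
  · intro h
    refine Finset.mem_image.2 ⟨fun i => l.get ⟨i.1, by omega⟩, Finset.mem_univ _, ?_⟩
    apply List.ext_get (by simp [h])
    intro i h1 h2
    rw [List.get_ofFn]
    rfl

lemma card_WF (j : ℕ) : (WF j).card = 2^j := by
  rw [WF, Finset.card_image_of_injective _ List.ofFn_injective, Finset.card_univ]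
  simp

/-- the non-leaf vertices -/
noncomputable def NL (n : ℕ) : Finset (Vtx n) :=
  Finset.univ.filter (fun v => v.1.length < n)

lemma card_level_le (s : Finset (Vtx n)) (j : ℕ) :
    ((s.filter (fun v => v.1.length = j)).card : ℝ) ≤ 2^j := by
  have h1 : (s.filter (fun v => v.1.length = j)).card ≤ (WF j).card := by
    apply Finset.card_le_card_of_injOn (fun v => v.1)
    · intro v hv; exact mem_WF.2 (Finset.mem_filter.1 hv).2
    · intro a _ b _ h; exact Subtype.ext h
  rw [card_WF] at h1
  exact_mod_cast h1

lemma card_L1 (hn : 1 ≤ n) :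
    (((NL n)).filter (fun v => v.1.length = n - 1)).card = 2^(n-1) := by
  rw [← card_WF (n-1)]
  refine Finset.card_bij (fun v _ => v.1) ?_ ?_ ?_
  · intro v hv
    rw [Finset.mem_filter] at hv
    exact mem_WF.2 hv.2
  · intro a _ b _ h; exact Subtype.ext h
  · intro l hl
    have hlen := mem_WF.1 hl
    refine ⟨⟨l, by omega⟩, ?_, rfl⟩
    refine Finset.mem_filter.2 ⟨Finset.mem_filter.2 ⟨Finset.mem_univ _, ?_⟩, ?_⟩
    · show l.length < n
      omega
    · exact hlen

lemma nat_two_pow_sum (K : ℕ) : ∑ i ∈ Finset.range K, 2^i ≤ 2^K := by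
  induction K with
  | zero => simp
  | succ K ih =>
    rw [Finset.sum_range_succ]
    have := pow_succ 2 K
    omega

lemma card_prefix_count (m : List Bool) :
    (((NL n)).filter (fun v => m <+: v.1)).card ≤ 2^(n - m.length) := by
  classical
  have hmaps : ∀ v ∈ (NL n).filter (fun v => m <+: v.1), v.1.length ∈ Finset.range n := by
    intro v hv
    rw [Finset.mem_filter, NL, Finset.mem_filter] at hv
    exact Finset.mem_range.2 hv.1.2
  rw [Finset.card_eq_sum_card_fiberwise hmaps]
  have hbound : ∀ j ∈ Finset.range n,
      ((((NL n)).filter (fun v => m <+: v.1)).filter (fun v => v.1.length = j)).card ≤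
        (if j < m.length then 0 else 2^(j - m.length)) := by
    intro j hj
    split_ifs with hjm
    · refine le_of_eq ?_
      rw [Finset.card_eq_zero, Finset.filter_eq_empty_iff]
      intro v hv
      rw [Finset.mem_filter] at hv
      intro hlen
      have := hv.2.length_le
      omega
    · have h1 : ((((NL n)).filter (fun v => m <+: v.1)).filter
          (fun v => v.1.length = j)).card ≤ (WF (j - m.length)).card := by
        apply Finset.card_le_card_of_injOn (fun v => v.1.drop m.length)
        · intro v hv
          simp only [Finset.mem_coe, Finset.mem_filter] at hv
          refine mem_WF.2 ?_
          rw [List.length_drop]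
          omega
        · intro a ha b hb h
          simp only [Finset.mem_coe, Finset.mem_filter] at ha hb
          apply Subtype.ext
          obtain ⟨ta, hta⟩ := ha.1.2
          obtain ⟨tb, htb⟩ := hb.1.2
          have hda : a.1.drop m.length = ta := by rw [← hta, List.drop_left]
          have hdb : b.1.drop m.length = tb := by rw [← htb, List.drop_left]
          have h' : List.drop m.length a.1 = List.drop m.length b.1 := h
          rw [hda, hdb] at h'
          rw [← hta, ← htb, h']
      rw [card_WF] at h1
      exact h1
  calc ∑ j ∈ Finset.range n, ((((NL n)).filter (fun v => m <+: v.1)).filter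
        (fun v => v.1.length = j)).card
      ≤ ∑ j ∈ Finset.range n, (if j < m.length then 0 else 2^(j - m.length)) :=
        Finset.sum_le_sum hbound
    _ ≤ 2^(n - m.length) := by
        rw [Finset.sum_ite, Finset.sum_const_zero, zero_add]
        have hset : (Finset.range n).filter (fun j => ¬ j < m.length) =
            Finset.Ico m.length n := by
          ext j
          rw [Finset.mem_filter, Finset.mem_range, Finset.mem_Ico]
          omega
        rw [hset, Finset.sum_Ico_eq_sum_range]
        have hcongr : ∀ i ∈ Finset.range (n - m.length),
            2^(m.length + i - m.length) = 2^i := by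
          intro i _; congr 1; omega
        rw [Finset.sum_congr rfl hcongr]
        exact nat_two_pow_sum _

end Counting

section Moments

variable {n : ℕ} {p : ℝ}

lemma clusterSize_eq (ω : Edg n → Bool) :
    (clusterSize n ω : ℝ) = ∑ v ∈ NL n, (if ω ∈ Xwet v then (1:ℝ) else 0) := by
  classical
  rw [clusterSize, Nat.card_eq_fintype_card, Fintype.card_subtype]
  have hfil : (Finset.univ.filter (fun v : Vtx n => v.1.length < n ∧ ω ∈ Xwet v)) =
      (NL n).filter (fun v => ω ∈ Xwet v) := by
    rw [NL, Finset.filter_filter]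
  rw [hfil, Finset.card_filter]
  push_cast
  exact Finset.sum_congr rfl fun v _ => by by_cases h : ω ∈ Xwet v <;> simp [h]

lemma integral_ind (hp0 : 0 ≤ p) (hp1 : p ≤ 1) (A : Set (Edg n → Bool))
    [DecidablePred (· ∈ A)] :
    ∫ ω, (if ω ∈ A then (1:ℝ) else 0) ∂(treeMeasure n p) = Pr n p A := by
  haveI := tree_prob (n := n) hp0 hp1
  have h : (fun ω : Edg n → Bool => if ω ∈ A then (1:ℝ) else 0) =
      A.indicator (fun _ => (1:ℝ)) := by
    ext ω; simp [Set.indicator_apply]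
  rw [h, integral_indicator_const (1:ℝ) (A.toFinite.measurableSet)]
  simp [Pr]
  rfl

lemma exp_eq (hp0 : 0 ≤ p) (hp1 : p ≤ 1) :
    ∫ ω, (clusterSize n ω : ℝ) ∂(treeMeasure n p) = ∑ v ∈ NL n, Pr n p (Xwet v) := by
  haveI := tree_prob (n := n) hp0 hp1
  calc ∫ ω, (clusterSize n ω : ℝ) ∂(treeMeasure n p)
      = ∫ ω, ∑ v ∈ NL n, (if ω ∈ Xwet v then (1:ℝ) else 0) ∂(treeMeasure n p) := by
        simp_rw [clusterSize_eq]
    _ = ∑ v ∈ NL n, ∫ ω, (if ω ∈ Xwet v then (1:ℝ) else 0) ∂(treeMeasure n p) :=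
        integral_finset_sum _ (fun v _ => Integrable.of_finite)
    _ = ∑ v ∈ NL n, Pr n p (Xwet v) :=
        Finset.sum_congr rfl fun v _ => integral_ind hp0 hp1 _

lemma clusterSize_meas : Measurable (fun ω : Edg n → Bool => (clusterSize n ω : ℝ)) :=
  fun s _ => (((fun ω : Edg n → Bool => (clusterSize n ω : ℝ)) ⁻¹' s).toFinite.measurableSet)

lemma var_eq (hp0 : 0 ≤ p) (hp1 : p ≤ 1) :
    variance (fun ω => (clusterSize n ω : ℝ)) (treeMeasure n p) =
      (∑ x ∈ (NL n) ×ˢ (NL n), Pr n p (Xwet x.1 ∩ Xwet x.2))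
        - (∑ v ∈ NL n, Pr n p (Xwet v))^2 := by
  haveI := tree_prob (n := n) hp0 hp1
  have hmem : MemLp (fun ω => (clusterSize n ω : ℝ)) 2 (treeMeasure n p) := by
    refine memLp_of_bounded (a := 0) (b := (Fintype.card (Vtx n) : ℝ))
      (Filter.Eventually.of_forall fun ω => ⟨?_, ?_⟩) clusterSize_meas.aestronglyMeasurable 2
    · positivity
    · have : clusterSize n ω ≤ Fintype.card (Vtx n) := by
        rw [clusterSize, Nat.card_eq_fintype_card]
        exact Fintype.card_subtype_le _
      exact_mod_cast this
  rw [variance_eq_sub hmem, exp_eq hp0 hp1]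
  congr 1
  have hsq : ∀ ω : Edg n → Bool, ((fun ω => (clusterSize n ω : ℝ))^2) ω =
      ∑ x ∈ (NL n) ×ˢ (NL n), (if ω ∈ Xwet x.1 ∩ Xwet x.2 then (1:ℝ) else 0) := by
    intro ω
    rw [Pi.pow_apply, pow_two, clusterSize_eq, Finset.sum_mul_sum, ← Finset.sum_product']
    refine Finset.sum_congr rfl fun x _ => ?_
    by_cases h1 : ω ∈ Xwet x.1 <;> by_cases h2 : ω ∈ Xwet x.2 <;>
      simp [h1, h2, Set.mem_inter_iff]
  calc ∫ ω, ((fun ω => (clusterSize n ω : ℝ))^2) ω ∂(treeMeasure n p)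
      = ∫ ω, ∑ x ∈ (NL n) ×ˢ (NL n), (if ω ∈ Xwet x.1 ∩ Xwet x.2 then (1:ℝ) else 0)
          ∂(treeMeasure n p) := by simp_rw [hsq]
    _ = ∑ x ∈ (NL n) ×ˢ (NL n), ∫ ω, (if ω ∈ Xwet x.1 ∩ Xwet x.2 then (1:ℝ) else 0)
          ∂(treeMeasure n p) := integral_finset_sum _ (fun x _ => Integrable.of_finite)
    _ = ∑ x ∈ (NL n) ×ˢ (NL n), Pr n p (Xwet x.1 ∩ Xwet x.2) :=
        Finset.sum_congr rfl fun x _ => integral_ind hp0 hp1 _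

lemma var_sub_exp (hp0 : 0 ≤ p) (hp1 : p ≤ 1) :
    variance (fun ω => (clusterSize n ω : ℝ)) (treeMeasure n p)
      - ∫ ω, (clusterSize n ω : ℝ) ∂(treeMeasure n p) =
      (∑ x ∈ (NL n).offDiag,
        (Pr n p (Xwet x.1 ∩ Xwet x.2) - Pr n p (Xwet x.1) * Pr n p (Xwet x.2)))
      - ∑ v ∈ NL n, (Pr n p (Xwet v))^2 := by
  classical
  rw [var_eq hp0 hp1, exp_eq hp0 hp1]
  have hsplit1 : ∑ x ∈ (NL n) ×ˢ (NL n), Pr n p (Xwet x.1 ∩ Xwet x.2) =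
      (∑ v ∈ NL n, Pr n p (Xwet v)) +
        ∑ x ∈ (NL n).offDiag, Pr n p (Xwet x.1 ∩ Xwet x.2) := by
    rw [← Finset.diag_union_offDiag (NL n),
      Finset.sum_union (Finset.disjoint_diag_offDiag _), Finset.sum_diag]
    congr 1
    exact Finset.sum_congr rfl fun v _ => by rw [Set.inter_self]
  have hsplit2 : (∑ v ∈ NL n, Pr n p (Xwet v))^2 =
      (∑ v ∈ NL n, (Pr n p (Xwet v))^2) +
        ∑ x ∈ (NL n).offDiag, Pr n p (Xwet x.1) * Pr n p (Xwet x.2) := by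
    rw [pow_two, Finset.sum_mul_sum, ← Finset.sum_product',
      ← Finset.diag_union_offDiag (NL n),
      Finset.sum_union (Finset.disjoint_diag_offDiag _), Finset.sum_diag]
    congr 1
    exact Finset.sum_congr rfl fun v _ => (pow_two _).symm
  rw [hsplit1, hsplit2, Finset.sum_sub_distrib]
  ring

end Moments

section FinalBounds

variable {n : ℕ} {p : ℝ}

lemma sum_geom_levels (y : ℝ) (h0 : 0 ≤ y) (hy : y ≤ 1/2) (N : ℕ) (hN : N ≤ n) :
    ∑ j ∈ Finset.range N, (2:ℝ)^j * (2*y)^(n-j) ≤ 2^n * y^(n-N+1) * 2 := by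
  have hterm : ∀ j ∈ Finset.range N, (2:ℝ)^j * (2*y)^(n-j) = 2^n * y^(n-j) := by
    intro j hj
    rw [Finset.mem_range] at hj
    rw [mul_pow, ← mul_assoc, ← pow_add]
    have he : j + (n - j) = n := by omega
    rw [he]
  rw [Finset.sum_congr rfl hterm, ← Finset.mul_sum]
  have hrefl := Finset.sum_range_reflect (fun j => y^(n-j)) N
  rw [← hrefl]
  have hterm2 : ∀ j ∈ Finset.range N, y^(n-(N-1-j)) = y^(n-N+1) * y^j := by
    intro j hj
    rw [Finset.mem_range] at hj
    rw [← pow_add]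
    congr 1
    omega
  rw [Finset.sum_congr rfl hterm2, ← Finset.mul_sum]
  have hgeom := geom_le_two h0 hy N
  have h1 : (0:ℝ) ≤ y^(n-N+1) := pow_nonneg h0 _
  have h2 : (0:ℝ) ≤ (2:ℝ)^n := by positivity
  calc (2:ℝ)^n * (y^(n-N+1) * ∑ j ∈ Finset.range N, y^j)
      ≤ 2^n * (y^(n-N+1) * 2) :=
        mul_le_mul_of_nonneg_left (mul_le_mul_of_nonneg_left hgeom h1) h2
    _ = 2^n * y^(n-N+1) * 2 := by ring

lemma sum_level_le (s : Finset (Vtx n)) (N : ℕ) (hmaps : ∀ v ∈ s, v.1.length < N)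
    (g : ℕ → ℝ) (hg : ∀ j, 0 ≤ g j) (f : Vtx n → ℝ) (hf : ∀ v ∈ s, f v ≤ g v.1.length) :
    ∑ v ∈ s, f v ≤ ∑ j ∈ Finset.range N, 2^j * g j := by
  classical
  calc ∑ v ∈ s, f v ≤ ∑ v ∈ s, g v.1.length := Finset.sum_le_sum hf
    _ = ∑ j ∈ Finset.range N, ∑ v ∈ s.filter (fun v => v.1.length = j), g v.1.length :=
        (Finset.sum_fiberwise_of_maps_to (fun v hv => Finset.mem_range.2 (hmaps v hv)) _).symm
    _ ≤ _ := by
        refine Finset.sum_le_sum fun j hj => ?_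
        have h1 : ∑ v ∈ s.filter (fun v => v.1.length = j), g v.1.length =
            ((s.filter (fun v => v.1.length = j)).card : ℝ) * g j := by
          rw [Finset.sum_congr rfl (fun v hv => by rw [(Finset.mem_filter.1 hv).2]),
            Finset.sum_const, nsmul_eq_mul]
        rw [h1]
        exact mul_le_mul_of_nonneg_right (card_level_le s j) (hg j)

lemma exp_bound (hp0 : 0 < p) (hp16 : p ≤ 1/16) (hn : 1 ≤ n) :
    |(∑ v ∈ NL n, Pr n p (Xwet v)) - 2^n * p| ≤ 6 * (2^n * p^2) := by
  classical
  have hp1 : p ≤ 1 := by linarith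
  have hp14 : p ≤ 1/4 := by linarith
  have hpow : (2:ℝ)^n = 2^(n-1) * 2 := by
    rw [← pow_succ]
    congr 1
    omega
  have hL1card := card_L1 (n := n) hn
  have hsub : ∑ v ∈ (NL n).filter (fun v => v.1.length = n-1), (Pr n p (Xwet v) - 2*p)
      = (∑ v ∈ (NL n).filter (fun v => v.1.length = n-1), Pr n p (Xwet v)) - 2^n * p := by
    rw [Finset.sum_sub_distrib, Finset.sum_const, hL1card, nsmul_eq_mul]
    push_cast
    congr 1
    rw [hpow]
    ring
  have habs1 : |(∑ v ∈ (NL n).filter (fun v => v.1.length = n-1), Pr n p (Xwet v)) - 2^n * p|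
      ≤ 2 * (2^n * p^2) := by
    rw [← hsub]
    calc |∑ v ∈ (NL n).filter (fun v => v.1.length = n-1), (Pr n p (Xwet v) - 2*p)|
        ≤ ∑ v ∈ (NL n).filter (fun v => v.1.length = n-1), |Pr n p (Xwet v) - 2*p| :=
          Finset.abs_sum_le_sum_abs _ _
      _ ≤ ∑ v ∈ (NL n).filter (fun v => v.1.length = n-1), 4*p^2 := by
          refine Finset.sum_le_sum fun v hv => ?_
          exact X_lvl1_bounds hp0 hp14 v hn (Finset.mem_filter.1 hv).2
      _ = ((2:ℝ)^(n-1)) * (4*p^2) := by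
          rw [Finset.sum_const, hL1card, nsmul_eq_mul]
          push_cast
          rfl
      _ ≤ 2 * (2^n * p^2) := le_of_eq (by rw [hpow]; ring)
  have hrest : ∑ v ∈ (NL n).filter (fun v => ¬ v.1.length = n-1), Pr n p (Xwet v)
      ≤ 4*(2^n * p^2) := by
    have hmaps : ∀ v ∈ (NL n).filter (fun v => ¬ v.1.length = n-1), v.1.length < n - 1 := by
      intro v hv
      rw [Finset.mem_filter, NL, Finset.mem_filter] at hv
      omega
    have hmain := sum_level_le ((NL n).filter (fun v => ¬ v.1.length = n-1)) (n-1) hmaps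
      (fun j => 2*(2*p)^(n-j)) (fun j => by positivity) (fun v => Pr n p (Xwet v))
      (fun v _ => X_le hp0 hp14 v)
    have hgl := sum_geom_levels (n := n) p hp0.le (by linarith) (n-1) (by omega)
    have hexp : n - (n-1) + 1 = 2 := by omega
    rw [hexp] at hgl
    calc ∑ v ∈ (NL n).filter (fun v => ¬ v.1.length = n-1), Pr n p (Xwet v)
        ≤ ∑ j ∈ Finset.range (n-1), 2^j * (2*(2*p)^(n-j)) := hmain
      _ = 2 * ∑ j ∈ Finset.range (n-1), 2^j * (2*p)^(n-j) := by
          rw [Finset.mul_sum]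
          exact Finset.sum_congr rfl fun j _ => by ring
      _ ≤ 2 * (2^n * p^2 * 2) := by linarith
      _ = 4*(2^n * p^2) := by ring
  have hrest0 : 0 ≤ ∑ v ∈ (NL n).filter (fun v => ¬ v.1.length = n-1), Pr n p (Xwet v) :=
    Finset.sum_nonneg fun v _ => Pr_nonneg _
  rw [← Finset.sum_filter_add_sum_filter_not (NL n) (fun v => v.1.length = n - 1)]
  have hnn : (0:ℝ) ≤ 2^n * p^2 := by positivity
  rw [abs_le] at habs1 ⊢
  constructor <;> linarith

lemma sq_bound (hp0 : 0 < p) (hp16 : p ≤ 1/16) :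
    ∑ v ∈ NL n, (Pr n p (Xwet v))^2 ≤ 16 * (2^n * p^2) := by
  classical
  have hp14 : p ≤ 1/4 := by linarith
  have hf : ∀ v ∈ NL n, (Pr n p (Xwet v))^2 ≤ (fun j => 4*(2*(2*p^2))^(n-j)) v.1.length := by
    intro v _
    have hq := X_le hp0 hp14 v
    have hq0 := Pr_nonneg (n := n) (p := p) (Xwet v)
    have h1 : (Pr n p (Xwet v))^2 ≤ (2*(2*p)^(n - v.1.length))^2 := by nlinarith
    refine le_trans h1 (le_of_eq ?_)
    show (2*(2*p)^(n - v.1.length))^2 = 4*(2*(2*p^2))^(n-v.1.length)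
    rw [mul_pow, ← pow_mul, mul_comm (n - v.1.length) 2, pow_mul]
    have h2 : ((2:ℝ)*p)^2 = 2*(2*p^2) := by ring
    rw [h2]
    norm_num
  have hmain := sum_level_le (NL n) n (fun v hv => (Finset.mem_filter.1 hv).2)
    (fun j => 4*(2*(2*p^2))^(n-j)) (fun j => by positivity) _ hf
  have hgl := sum_geom_levels (n := n) (2*p^2) (by positivity) (by nlinarith) n le_rfl
  have hexp : n - n + 1 = 1 := by omega
  rw [hexp, pow_one] at hgl
  calc ∑ v ∈ NL n, (Pr n p (Xwet v))^2
      ≤ ∑ j ∈ Finset.range n, 2^j * (4*(2*(2*p^2))^(n-j)) := hmain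
    _ = 4 * ∑ j ∈ Finset.range n, 2^j * (2*(2*p^2))^(n-j) := by
        rw [Finset.mul_sum]
        exact Finset.sum_congr rfl fun j _ => by ring
    _ ≤ 4 * (2^n * (2*p^2) * 2) := by linarith
    _ = 16 * (2^n * p^2) := by ring

lemma lcp_short (u v : Vtx n) (hu : u.1.length < n) (hv : v.1.length < n)
    (huv : u.1 ≠ v.1) : (lcp u.1 v.1).length + 2 ≤ n := by
  have h1 : lcp u.1 v.1 <+: u.1 := lcp_prefix_left _ _
  have h2 : lcp u.1 v.1 <+: v.1 := lcp_prefix_right _ _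
  by_cases hcase : (lcp u.1 v.1).length = u.1.length
  · have hpre : u.1 <+: v.1 := (h1.eq_of_length hcase) ▸ h2
    have h3 : u.1.length < v.1.length :=
      lt_of_le_of_ne hpre.length_le (fun hl => huv (hpre.eq_of_length hl))
    omega
  · have h3 : (lcp u.1 v.1).length < u.1.length := lt_of_le_of_ne h1.length_le hcase
    omega

lemma pow_term (x : ℝ) (k : ℕ) : ((2:ℝ)^k)^2 * (4*(2*x)^k) = 4 * (2*(4*x))^k := by
  have h4 : (4:ℝ)^k = ((2:ℝ)^k)^2 := by
    rw [show (4:ℝ) = 2^2 by norm_num, ← pow_mul, ← pow_mul, Nat.mul_comm]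
  rw [mul_pow, mul_pow, mul_pow, h4]
  ring

lemma off_bound (hp0 : 0 < p) (hp16 : p ≤ 1/16) (hn : 1 ≤ n) :
    ∑ x ∈ (NL n).offDiag,
      |Pr n p (Xwet x.1 ∩ Xwet x.2) - Pr n p (Xwet x.1) * Pr n p (Xwet x.2)|
      ≤ 128 * (2^n * p^2) := by
  classical
  have hp14 : p ≤ 1/4 := by linarith
  have hmemNL : ∀ v : Vtx n, v ∈ NL n → v.1.length < n :=
    fun v hv => (Finset.mem_filter.1 hv).2
  have hmaps : ∀ x ∈ (NL n).offDiag, lcp x.1.1 x.2.1 ∈ (Finset.range (n-1)).biUnion WF := by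
    intro x hx
    rw [Finset.mem_offDiag] at hx
    have hne : x.1.1 ≠ x.2.1 := fun h => hx.2.2 (Subtype.ext h)
    have hshort := lcp_short x.1 x.2 (hmemNL _ hx.1) (hmemNL _ hx.2.1) hne
    exact Finset.mem_biUnion.2 ⟨(lcp x.1.1 x.2.1).length,
      Finset.mem_range.2 (by omega), mem_WF.2 rfl⟩
  have hstep1 : ∑ x ∈ (NL n).offDiag,
      |Pr n p (Xwet x.1 ∩ Xwet x.2) - Pr n p (Xwet x.1) * Pr n p (Xwet x.2)| ≤
      ∑ x ∈ (NL n).offDiag, 4 * (2*p)^(n - (lcp x.1.1 x.2.1).length) := by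
    refine Finset.sum_le_sum fun x hx => ?_
    rw [Finset.mem_offDiag] at hx
    exact pair_bound hp0 hp14 x.1 x.2 (hmemNL _ hx.1) (hmemNL _ hx.2.1)
      (fun h => hx.2.2 (Subtype.ext h))
  have hstep2 : ∑ x ∈ (NL n).offDiag, 4 * (2*p)^(n - (lcp x.1.1 x.2.1).length) =
      ∑ m ∈ (Finset.range (n-1)).biUnion WF,
        ∑ x ∈ (NL n).offDiag.filter (fun x => lcp x.1.1 x.2.1 = m),
          4 * (2*p)^(n - (lcp x.1.1 x.2.1).length) :=
    (Finset.sum_fiberwise_of_maps_to hmaps _).symm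
  have hfiber : ∀ m ∈ (Finset.range (n-1)).biUnion WF,
      ∑ x ∈ (NL n).offDiag.filter (fun x => lcp x.1.1 x.2.1 = m),
        4 * (2*p)^(n - (lcp x.1.1 x.2.1).length) ≤
      ((2:ℝ)^(n - m.length))^2 * (4 * (2*p)^(n - m.length)) := by
    intro m _
    have hterm : ∀ x ∈ (NL n).offDiag.filter (fun x => lcp x.1.1 x.2.1 = m),
        4 * (2*p)^(n - (lcp x.1.1 x.2.1).length) = 4*(2*p)^(n - m.length) := by
      intro x hx
      rw [(Finset.mem_filter.1 hx).2]
    rw [Finset.sum_congr rfl hterm, Finset.sum_const, nsmul_eq_mul]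
    have hsubfib : (NL n).offDiag.filter (fun x => lcp x.1.1 x.2.1 = m) ⊆
        ((NL n).filter (fun v => m <+: v.1)) ×ˢ ((NL n).filter (fun v => m <+: v.1)) := by
      intro x hx
      rw [Finset.mem_filter, Finset.mem_offDiag] at hx
      rw [Finset.mem_product, Finset.mem_filter, Finset.mem_filter]
      obtain ⟨⟨h1, h2, _⟩, hl⟩ := hx
      exact ⟨⟨h1, hl ▸ lcp_prefix_left _ _⟩, ⟨h2, hl ▸ lcp_prefix_right _ _⟩⟩
    have hcard : ((NL n).offDiag.filter (fun x => lcp x.1.1 x.2.1 = m)).card ≤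
        2^(n-m.length) * 2^(n-m.length) := by
      calc _ ≤ _ := Finset.card_le_card hsubfib
        _ = _ := Finset.card_product _ _
        _ ≤ _ := Nat.mul_le_mul (card_prefix_count m) (card_prefix_count m)
    have hcast : (((NL n).offDiag.filter (fun x => lcp x.1.1 x.2.1 = m)).card : ℝ) ≤
        ((2:ℝ)^(n-m.length))^2 := by
      rw [pow_two]
      exact_mod_cast hcard
    have hpos : (0:ℝ) ≤ 4 * (2*p)^(n-m.length) := by positivity
    exact mul_le_mul_of_nonneg_right hcast hpos
  have hdisj : ((Finset.range (n-1) : Finset ℕ) : Set ℕ).PairwiseDisjoint WF := by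
    intro a _ b _ hab
    refine Finset.disjoint_left.2 fun l hla hlb => hab ?_
    rw [← mem_WF.1 hla, ← mem_WF.1 hlb]
  have hgl := sum_geom_levels (n := n) (4*p) (by positivity) (by linarith) (n-1) (by omega)
  have hexp : n - (n-1) + 1 = 2 := by omega
  rw [hexp] at hgl
  calc ∑ x ∈ (NL n).offDiag,
      |Pr n p (Xwet x.1 ∩ Xwet x.2) - Pr n p (Xwet x.1) * Pr n p (Xwet x.2)|
      ≤ ∑ x ∈ (NL n).offDiag, 4 * (2*p)^(n - (lcp x.1.1 x.2.1).length) := hstep1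
    _ = ∑ m ∈ (Finset.range (n-1)).biUnion WF,
        ∑ x ∈ (NL n).offDiag.filter (fun x => lcp x.1.1 x.2.1 = m),
          4 * (2*p)^(n - (lcp x.1.1 x.2.1).length) := hstep2
    _ ≤ ∑ m ∈ (Finset.range (n-1)).biUnion WF,
        ((2:ℝ)^(n - m.length))^2 * (4 * (2*p)^(n - m.length)) :=
        Finset.sum_le_sum hfiber
    _ = ∑ s ∈ Finset.range (n-1), ∑ m ∈ WF s,
        ((2:ℝ)^(n - m.length))^2 * (4 * (2*p)^(n - m.length)) :=
        Finset.sum_biUnion hdisj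
    _ = ∑ s ∈ Finset.range (n-1), (2:ℝ)^s * (4 * (2*(4*p))^(n-s)) := by
        refine Finset.sum_congr rfl fun s _ => ?_
        have hterm3 : ∀ m ∈ WF s,
            ((2:ℝ)^(n - m.length))^2 * (4 * (2*p)^(n - m.length)) =
            4 * (2*(4*p))^(n-s) := by
          intro m hm
          rw [mem_WF.1 hm, pow_term]
        rw [Finset.sum_congr rfl hterm3, Finset.sum_const, nsmul_eq_mul, card_WF]
        push_cast
        ring
    _ = 4 * ∑ s ∈ Finset.range (n-1), (2:ℝ)^s * (2*(4*p))^(n-s) := by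
        rw [Finset.mul_sum]
        exact Finset.sum_congr rfl fun s _ => by ring
    _ ≤ 4 * (2^n * (4*p)^2 * 2) := by linarith
    _ = 128 * (2^n * p^2) := by ring

end FinalBounds

/-- **Variance of the cluster size in the badly subcritical regime.**
If `p_n → 0` then `Var(|C_n|) ∼ 2^n p_n` and
`Var(|C_n|) - E[|C_n|] = O(2^n p_n²)`. -/
theorem variance_clusterSize (pn : ℕ → ℝ)
    (hp0 : ∀ n, 0 < pn n) (hp1 : ∀ n, pn n < 1)
    (hlim : Filter.Tendsto pn Filter.atTop (nhds 0)) :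
    Filter.Tendsto
      (fun n => ProbabilityTheory.variance (fun ω => (clusterSize n ω : ℝ))
          (treeMeasure n (pn n)) / (2 ^ n * pn n)) Filter.atTop (nhds 1) ∧
    ∃ C > (0 : ℝ), ∃ N : ℕ, ∀ n ≥ N,
      |ProbabilityTheory.variance (fun ω => (clusterSize n ω : ℝ))
          (treeMeasure n (pn n)) -
        ∫ ω, (clusterSize n ω : ℝ) ∂(treeMeasure n (pn n))| ≤
        C * 2 ^ n * pn n ^ 2 := by
  classical
  have hev : ∀ᶠ k in Filter.atTop, pn k < 1/16 :=
    hlim.eventually (gt_mem_nhds (by norm_num))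
  obtain ⟨N0, hN0⟩ := Filter.eventually_atTop.1 hev
  have key : ∀ k, max N0 1 ≤ k →
      |ProbabilityTheory.variance (fun ω => (clusterSize k ω : ℝ)) (treeMeasure k (pn k)) -
        ∫ ω, (clusterSize k ω : ℝ) ∂(treeMeasure k (pn k))| ≤ 144 * (2^k * pn k^2) ∧
      |(∫ ω, (clusterSize k ω : ℝ) ∂(treeMeasure k (pn k))) - 2^k * pn k| ≤
        6 * (2^k * pn k^2) := by
    intro k hk
    have hk1 : 1 ≤ k := le_trans (le_max_right _ _) hk
    have hk16 : pn k ≤ 1/16 := (hN0 k (le_trans (le_max_left _ _) hk)).le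
    have h0 := hp0 k
    have h1' := hp1 k
    constructor
    · rw [var_sub_exp h0.le h1'.le]
      have hoff := off_bound (n := k) h0 hk16 hk1
      have hsq := sq_bound (n := k) h0 hk16
      have h3 : |∑ x ∈ (NL k).offDiag,
          (Pr k (pn k) (Xwet x.1 ∩ Xwet x.2) -
            Pr k (pn k) (Xwet x.1) * Pr k (pn k) (Xwet x.2))|
          ≤ 128*(2^k * pn k^2) :=
        le_trans (Finset.abs_sum_le_sum_abs _ _) hoff
      have h4 : 0 ≤ ∑ v ∈ NL k, (Pr k (pn k) (Xwet v))^2 :=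
        Finset.sum_nonneg fun v _ => sq_nonneg _
      rw [abs_le] at h3 ⊢
      constructor <;> linarith
    · rw [exp_eq h0.le h1'.le]
      exact exp_bound h0 hk16 hk1
  constructor
  · have hdiff : Filter.Tendsto (fun k => ProbabilityTheory.variance
        (fun ω => (clusterSize k ω : ℝ)) (treeMeasure k (pn k)) / (2^k * pn k) - 1)
        Filter.atTop (nhds 0) := by
      apply squeeze_zero_norm' (a := fun k => 150 * pn k)
      · refine Filter.eventually_atTop.2 ⟨max N0 1, fun k hk => ?_⟩
        obtain ⟨h1, h2⟩ := key k hk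
        have h0 := hp0 k
        have hpos : (0:ℝ) < 2^k * pn k := by positivity
        have heq : ProbabilityTheory.variance (fun ω => (clusterSize k ω : ℝ))
            (treeMeasure k (pn k)) / (2^k * pn k) - 1 =
            (ProbabilityTheory.variance (fun ω => (clusterSize k ω : ℝ))
              (treeMeasure k (pn k)) - 2^k * pn k) / (2^k * pn k) := by
          field_simp
        rw [Real.norm_eq_abs, heq, abs_div, abs_of_pos hpos, div_le_iff₀ hpos]
        have htri := abs_sub_le (ProbabilityTheory.variance
            (fun ω => (clusterSize k ω : ℝ)) (treeMeasure k (pn k)))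
          (∫ ω, (clusterSize k ω : ℝ) ∂(treeMeasure k (pn k))) (2^k * pn k)
        have h5 : |ProbabilityTheory.variance (fun ω => (clusterSize k ω : ℝ))
            (treeMeasure k (pn k)) - 2^k * pn k| ≤ 150 * (2^k * pn k^2) := by
          linarith
        refine le_trans h5 (le_of_eq ?_)
        ring
      · have h6 := hlim.const_mul (150:ℝ)
        simpa using h6
    have hfin := hdiff.add_const 1
    simp only [sub_add_cancel, zero_add] at hfin
    exact hfin
  · refine ⟨150, by norm_num, max N0 1, fun k hk => ?_⟩
    have h1 := (key k hk).1
    have h0 := hp0 k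
    have hc : (0:ℝ) ≤ 2^k * pn k^2 := by positivity
    refine le_trans h1 ?_
    nlinarith
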